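/- arXiv:2508.07533 — 2 statements merged into one kernel-verified Lean document; each statement's English description precedes it below -/
import Mathlib

section
/- Let r ≥ 2 and n be positive integers with n = qr + p, 0 ≤ p ≤ r−1. If G is an n-vertex graph such that G minus some vertex u is r-partite, and e(G) ≥ (1 − 1/r)·n²/2 − n/r + p(p+2)/(2r) − p/2 + 1, then the degree of u in G satisfies d(u) ≥ (1 − 2/r)·n + (p+1)²/(2r) − (p−1)/2. -/
open SimpleGraph Finset

/-!
Deleting `u` removes exactly `d(u)` edges, and the remaining `r`-partite graph on `n - 1`
vertices has at most `(1 - 1/r)(n - 1)²/2` edges by Turán's theorem. Hence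
`d(u) ≥ e(G) - (1 - 1/r)(n - 1)²/2`, and subtracting this from the assumed lower bound on `e(G)`
gives exactly the claimed bound, as an identity in `n`, `p` and `1/r`.
-/

namespace SimpleGraph

variable {V : Type*} [Fintype V] {G : SimpleGraph V} [DecidableRel G.Adj] {r : ℕ}

theorem CliqueFree.mul_card_edgeFinset_le (cf : G.CliqueFree (r + 1)) :
    2 * r * #G.edgeFinset ≤ (r - 1) * Fintype.card V ^ 2 := by
  rcases r.eq_zero_or_pos with rfl | hr
  · simp
  obtain ⟨H, _, maxH⟩ := exists_isTuranMaximal (V := V) hr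
  obtain ⟨e⟩ := (isTuranMaximal_iff_nonempty_iso_turanGraph hr).mp maxH
  calc 2 * r * #G.edgeFinset ≤ 2 * r * #H.edgeFinset := Nat.mul_le_mul_left _ (maxH.2 cf)
    _ = 2 * r * #(turanGraph (Fintype.card V) r).edgeFinset := by rw [e.card_edgeFinset_eq]
    _ ≤ (r - 1) * Fintype.card V ^ 2 := mul_card_edgeFinset_turanGraph_le

theorem Colorable.card_edgeFinset_le (hc : G.Colorable r) :
    (#G.edgeFinset : ℝ) ≤ (1 - 1 / (r : ℝ)) * Fintype.card V ^ 2 / 2 := by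
  rcases r.eq_zero_or_pos with rfl | hr
  · have : IsEmpty V := G.colorable_zero_iff.mp hc
    simp [Finset.eq_empty_of_isEmpty G.edgeFinset]
  have h := (hc.cliqueFree (lt_add_one r)).mul_card_edgeFinset_le
  have hrR : (0 : ℝ) < r := by exact_mod_cast hr
  rw [← Nat.cast_le (α := ℝ)] at h
  push_cast [Nat.cast_sub hr] at h
  rw [show (1 - 1 / (r : ℝ)) * Fintype.card V ^ 2 / 2 = (r - 1) * Fintype.card V ^ 2 / (2 * r) by
    field_simp, le_div_iff₀ (by positivity)]
  linarith

theorem card_edgeFinset_le_of_colorable_induce_ne (u : V)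
    (hc : (G.induce {v | v ≠ u}).Colorable r) :
    (#G.edgeFinset : ℝ) ≤ (1 - 1 / (r : ℝ)) * (Fintype.card V - 1) ^ 2 / 2 + G.degree u := by
  classical
  rw [← Set.compl_singleton_eq] at hc
  have hdel : (#G.edgeFinset : ℝ) ≤ #(G.induce {u}ᶜ).edgeFinset + G.degree u := by
    norm_cast
    rw [card_edgeFinset_induce_compl_singleton, card_edgeFinset_deleteIncidenceSet]
    omega
  have hcard : Fintype.card ({u}ᶜ : Set V) = Fintype.card V - 1 := by
    rw [Fintype.card_compl_set, Set.card_singleton]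
  have hV : 1 ≤ Fintype.card V := Fintype.card_pos_iff.mpr ⟨u⟩
  have hind := hc.card_edgeFinset_le
  rw [hcard, Nat.cast_sub hV, Nat.cast_one] at hind
  linarith

end SimpleGraph

theorem degree_lower_bound_delete_vertex_general (r n p : ℕ)
    (G : SimpleGraph (Fin n)) (u : Fin n)
    (hpart : (G.induce {v | v ≠ u}).Colorable r)
    (he : (1 - 1 / (r : ℝ)) * (n : ℝ) ^ 2 / 2 - (n : ℝ) / r
        + (p : ℝ) * ((p : ℝ) + 2) / (2 * r) - (p : ℝ) / 2 + 1 ≤ (G.edgeSet.ncard : ℝ)) :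
    (1 - 2 / (r : ℝ)) * (n : ℝ) + ((p : ℝ) + 1) ^ 2 / (2 * r) - ((p : ℝ) - 1) / 2
      ≤ ((G.neighborSet u).ncard : ℝ) := by
  classical
  have hE : G.edgeSet.ncard = #G.edgeFinset := by
    rw [Set.ncard_eq_toFinset_card', edgeFinset]
  have hN : (G.neighborSet u).ncard = G.degree u := by
    rw [Set.ncard_eq_toFinset_card', degree, neighborFinset]
  have hG := card_edgeFinset_le_of_colorable_induce_ne u hpart
  rw [Fintype.card_fin] at hG
  rw [hE] at he
  rw [hN]
  linear_combination he + hG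

/-- If `G` minus a vertex `u` is `r`-partite and
`e(G) ≥ (1 − 1/r)·n²/2 − n/r + p(p+2)/(2r) − p/2 + 1` (where `n = qr + p`, `0 ≤ p ≤ r−1`),
then `d(u) ≥ (1 − 2/r)·n + (p+1)²/(2r) − (p−1)/2`. -/
theorem degree_lower_bound_delete_vertex (r n q p : ℕ) (hr : 2 ≤ r) (hn : 1 ≤ n)
    (hnp : n = q * r + p) (hp : p ≤ r - 1)
    (G : SimpleGraph (Fin n)) (u : Fin n)
    (hpart : (G.induce {v | v ≠ u}).Colorable r)
    (he : (1 - 1 / (r : ℝ)) * (n : ℝ) ^ 2 / 2 - (n : ℝ) / r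
        + (p : ℝ) * ((p : ℝ) + 2) / (2 * r) - (p : ℝ) / 2 + 1 ≤ (G.edgeSet.ncard : ℝ)) :
    (1 - 2 / (r : ℝ)) * (n : ℝ) + ((p : ℝ) + 1) ^ 2 / (2 * r) - ((p : ℝ) - 1) / 2
      ≤ ((G.neighborSet u).ncard : ℝ) :=
  degree_lower_bound_delete_vertex_general r n p G u hpart he
end

section
/- Let r ≥ 3 and n ≥ r + 3. If G is an n-vertex graph whose chromatic number is at most r − 1, then e(G) < (1 − 1/r)·n²/2 − n/r + p(p+2)/(2r) − p/2 + 1, where n = qr + p with 0 ≤ p ≤ r − 1. -/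
/-!
Color the graph with `r - 1` colors and let `a_c` be the size of color class `c`. A vertex is
adjacent to nothing in its own class, so `2 e(G) ≤ n² - ∑ a_c²`. For any integer `q`,
`(a - q)(a - q - 1) ≥ 0` gives `a² ≥ (2q + 1) a - q (q + 1)`; summed over the `r - 1` classes,
`2 e(G) ≤ n² - (2q + 1) n + q (q + 1) (r - 1)`. With `n = q r + p` the claimed bound exceeds
half of the right-hand side by exactly `(q² - q + 2) / 2 > 0`.
-/

open SimpleGraph Finset

theorem Int.two_mul_add_one_mul_le_sq_add (a q : ℤ) : (2 * q + 1) * a ≤ a ^ 2 + q * (q + 1) := by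
  nlinarith [Int.le_self_sq (a - q)]

theorem Finset.two_mul_add_one_mul_sum_le_sum_sq_add {ι : Type*} (s : Finset ι) (f : ι → ℤ)
    (q : ℤ) : (2 * q + 1) * ∑ i ∈ s, f i ≤ ∑ i ∈ s, f i ^ 2 + #s * (q * (q + 1)) := by
  rw [mul_sum, ← nsmul_eq_mul, ← sum_const, ← sum_add_distrib]
  exact sum_le_sum fun i _ ↦ Int.two_mul_add_one_mul_le_sq_add (f i) q

namespace SimpleGraph

variable {V : Type*} [Fintype V] {G : SimpleGraph V}

namespace Coloring

variable {α : Type*} [DecidableEq α] (C : G.Coloring α)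

theorem degree_add_card_color_eq_le [DecidableRel G.Adj] (v : V) :
    G.degree v + #{u | C u = C v} ≤ Fintype.card V := by
  classical
  have hdisj : Disjoint (G.neighborFinset v) ({u | C u = C v} : Finset V) := by
    refine Finset.disjoint_left.2 fun u hu hu' ↦ ?_
    exact C.valid ((mem_neighborFinset G v u).1 hu) (mem_filter.1 hu').2.symm
  rw [degree, ← card_union_of_disjoint hdisj]
  exact card_le_univ _

theorem sum_card_color_eq [Fintype α] :
    ∑ v, #{u | C u = C v} = ∑ c : α, #{u | C u = c} ^ 2 := by
  rw [← sum_fiberwise univ C fun v ↦ #{u | C u = C v}]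
  refine sum_congr rfl fun c _ ↦ ?_
  rw [sum_congr rfl fun v hv ↦ by rw [(mem_filter.1 hv).2], sum_const, smul_eq_mul, sq]

theorem two_mul_card_edgeFinset_add_sum_sq_le [Fintype α] [DecidableRel G.Adj] :
    2 * #G.edgeFinset + ∑ c : α, #{u | C u = c} ^ 2 ≤ Fintype.card V ^ 2 := by
  rw [← sum_degrees_eq_twice_card_edges, ← C.sum_card_color_eq, ← sum_add_distrib, sq,
    ← card_univ, ← smul_eq_mul, ← sum_const]
  exact sum_le_sum fun v _ ↦ C.degree_add_card_color_eq_le v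

end Coloring

theorem Colorable.two_mul_card_edgeFinset_le [DecidableRel G.Adj] {k : ℕ} (hG : G.Colorable k)
    (q : ℤ) :
    2 * (#G.edgeFinset : ℤ) ≤
      Fintype.card V ^ 2 - (2 * q + 1) * Fintype.card V + k * (q * (q + 1)) := by
  obtain ⟨C⟩ := hG
  have hsq := (univ : Finset (Fin k)).two_mul_add_one_mul_sum_le_sum_sq_add
    (fun c ↦ (#{u | C u = c} : ℤ)) q
  have hsum : ∑ c, (#{u | C u = c} : ℤ) = Fintype.card V := by
    exact_mod_cast (card_eq_sum_card_fiberwise fun v _ ↦ mem_univ (C v)).symm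
  rw [hsum, card_univ, Fintype.card_fin] at hsq
  have hcolor := C.two_mul_card_edgeFinset_add_sum_sq_le
  zify at hcolor
  linarith

end SimpleGraph

theorem lt_bound_of_two_mul_le {r n q p e : ℝ} (hr : r ≠ 0) (hn : n = q * r + p)
    (he : 2 * e ≤ n ^ 2 - (2 * q + 1) * n + (r - 1) * (q * (q + 1))) :
    e < (1 - 1 / r) * n ^ 2 / 2 - n / r + p * (p + 2) / (2 * r) - p / 2 + 1 := by
  have hbound : (1 - 1 / r) * n ^ 2 / 2 - n / r + p * (p + 2) / (2 * r) - p / 2 + 1 =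
      (n ^ 2 - (2 * q + 1) * n + (r - 1) * (q * (q + 1))) / 2 + (q ^ 2 - q + 2) / 2 := by
    subst hn
    field_simp
    ring
  rw [hbound]
  nlinarith [sq_nonneg (q - 1 / 2)]

theorem small_chromatic_few_edges_general (r n q p : ℕ) (hr : 3 ≤ r)
    (hnp : n = q * r + p)
    (G : SimpleGraph (Fin n)) (hχ : G.Colorable (r - 1)) :
    (G.edgeSet.ncard : ℝ) < (1 - 1 / (r : ℝ)) * (n : ℝ) ^ 2 / 2 - (n : ℝ) / r
        + (p : ℝ) * ((p : ℝ) + 2) / (2 * r) - (p : ℝ) / 2 + 1 := by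
  classical
  have hedges : (2 * #G.edgeFinset : ℝ) ≤
      n ^ 2 - (2 * q + 1) * n + ((r - 1 : ℕ) : ℝ) * (q * (q + 1)) := by
    have := hχ.two_mul_card_edgeFinset_le q
    rw [Fintype.card_fin] at this
    exact_mod_cast this
  have hnpR : (n : ℝ) = q * r + p := by exact_mod_cast hnp
  rw [← coe_edgeFinset, Set.ncard_coe_finset]
  exact lt_bound_of_two_mul_le (by positivity) hnpR (by rwa [Nat.cast_pred (by omega)] at hedges)

/-- Let `r ≥ 3`, `n ≥ r + 3`, `n = qr + p` with `0 ≤ p ≤ r−1`. If `G` is an `n`-vertex graph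
with chromatic number at most `r − 1`, then
`e(G) < (1 − 1/r)·n²/2 − n/r + p(p+2)/(2r) − p/2 + 1`. -/
theorem small_chromatic_few_edges (r n q p : ℕ) (hr : 3 ≤ r) (hn : r + 3 ≤ n)
    (hnp : n = q * r + p) (hp : p ≤ r - 1)
    (G : SimpleGraph (Fin n)) (hχ : G.Colorable (r - 1)) :
    (G.edgeSet.ncard : ℝ) < (1 - 1 / (r : ℝ)) * (n : ℝ) ^ 2 / 2 - (n : ℝ) / r
        + (p : ℝ) * ((p : ℝ) + 2) / (2 * r) - (p : ℝ) / 2 + 1 :=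
  small_chromatic_few_edges_general r n q p hr hnp G hχ
end
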